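/- In the real quaternion algebra ℍ, there is no quaternion x satisfying the linear equation (i + j)·x·k + k·x·(j + 1) = 1 + k. -/

import Mathlib

open Quaternion

/-- The quaternion unit `i`. -/
noncomputable def qi : ℍ[ℝ] := ⟨0, 1, 0, 0⟩
/-- The quaternion unit `j`. -/
noncomputable def qj : ℍ[ℝ] := ⟨0, 0, 1, 0⟩
/-- The quaternion unit `k`. -/
noncomputable def qk : ℍ[ℝ] := ⟨0, 0, 0, 1⟩

/-! The real part is a trace: `re (a * b) = re (b * a)`. Hence the functional
`q ↦ re (q * y)` kills every value of `x ↦ a * x * b + c * x * d` as soon as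
`b * y * a + d * y * c = 0`. For the given equation `y = 1 + i` works, and
`re ((1 + k) * (1 + i)) = 1`. -/

namespace Quaternion

variable {R : Type*} [CommRing R]

theorem re_mul_comm (a b : ℍ[R]) : (a * b).re = (b * a).re := by
  simp only [re_mul]
  ring

theorem re_mul_mul_mul_comm (a x b y : ℍ[R]) : (a * x * b * y).re = (x * (b * y * a)).re := by
  rw [mul_assoc, mul_assoc, re_mul_comm]
  simp only [mul_assoc]

theorem re_two_sided_mul (a b c d x y : ℍ[R]) :
    ((a * x * b + c * x * d) * y).re = (x * (b * y * a + d * y * c)).re := by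
  rw [add_mul, mul_add, re_add, re_add, re_mul_mul_mul_comm, re_mul_mul_mul_comm]

theorem ne_two_sided_mul_of_re_mul_ne_zero {a b c d z y : ℍ[R]}
    (hy : b * y * a + d * y * c = 0) (hz : (z * y).re ≠ 0) (x : ℍ[R]) :
    a * x * b + c * x * d ≠ z := by
  rintro rfl
  rw [re_two_sided_mul, hy, mul_zero, re_zero] at hz
  exact hz rfl

end Quaternion

/-- no quaternion `x` satisfies
`(i + j)·x·k + k·x·(j + 1) = 1 + k`. -/
theorem no_solution_of_linear_equation :
    ¬ ∃ x : ℍ[ℝ], (qi + qj) * x * qk + qk * x * (qj + 1) = 1 + qk := by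
  have annihilates : qk * (1 + qi) * (qi + qj) + (qj + 1) * (1 + qi) * qk = 0 := by
    ext <;> simp only [re_add, imI_add, imJ_add, imK_add, re_mul, imI_mul, imJ_mul, imK_mul] <;>
      simp [qi, qj, qk]
  have re_ne_zero : ((1 + qk) * (1 + qi)).re ≠ 0 := by
    simp only [re_mul, re_add, imI_add, imJ_add, imK_add]
    simp [qi, qk]
  rintro ⟨x, hx⟩
  exact Quaternion.ne_two_sided_mul_of_re_mul_ne_zero annihilates re_ne_zero x hx
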